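/- Let K = ⋃_n A_n be a Fraïssé structure with an exhaustion by finite substructures, where each A_n has finite big Ramsey degree R_n. Assume that for every r < ω there exist colorings γ^r_0, …, γ^r_{r-1} such that each γ^r_n is an unavoidable R_n-coloring of Emb(A_n,K) and γ^r_m ≪ γ^r_n for all m ≤ n < r. Then there exists a family of maps D(m,n) : Fin R_n × Emb(A_m,A_n) → Fin R_m (for m ≤ n < ω) such that: (a) for each m ≤ n and each f ∈ Emb(A_m,A_n), the map D(m,n)(·,f) is surjective; (b) for all m ≤ n ≤ N, f ∈ Emb(A_m,A_n), s ∈ Emb(A_n,A_N), and j ∈ Fin R_N, D(m,N)(j, s∘f) = D(m,n)(D(n,N)(j,s), f); (c) for every r < ω there are bijections σ_n : Fin R_n → image(γ^r_n) (n < r) such that for all m ≤ n < r, f ∈ Emb(A_m,A_n), j ∈ Fin R_n, and every s ∈ Emb(A_n,K) with γ^r_n(s) = σ_n(j), one has γ^r_m(s∘f) = σ_m(D(m,n)(j,f)). Moreover, any two families satisfying (a)–(c) are isomorphic: if D' is another such family, there are bijections τ_n : Fin R_n → Fin R_n (n < ω) with τ_m(D(m,n)(j,f)) = D'(m,n)(τ_n(j),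 f) for all m ≤ n < ω, j ∈ Fin R_n, and f ∈ Emb(A_m,A_n). -/

import Mathlib

open FirstOrder Language Set Function

/-- A subset `S ⊆ Emb(A,K)` is *large* if `η⁻¹(S) = Emb(A,K)` for some self-embedding `η` of `K`. -/
def EmbLarge {L : Language} {K : Type*} {A : Type*} [L.Structure K] [L.Structure A]
    (S : Set (A ↪[L] K)) : Prop :=
  ∃ η : K ↪[L] K, ∀ f : A ↪[L] K, η.comp f ∈ S

/-- A subset `S ⊆ Emb(A,K)` is *unavoidable* if `η⁻¹(S) ≠ ∅` for every self-embedding `η` of `K`. -/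
def EmbUnavoidable {L : Language} {K : Type*} {A : Type*} [L.Structure K] [L.Structure A]
    (S : Set (A ↪[L] K)) : Prop :=
  ∀ η : K ↪[L] K, ∃ f : A ↪[L] K, η.comp f ∈ S

/-- A subset `S ⊆ Emb(A,K)` is *somewhere unavoidable* if `η⁻¹(S)` is unavoidable for some
self-embedding `η` of `K`. -/
def EmbSomewhereUnavoidable {L : Language} {K : Type*} {A : Type*} [L.Structure K]
    [L.Structure A] (S : Set (A ↪[L] K)) : Prop :=
  ∃ η : K ↪[L] K, EmbUnavoidable {f : A ↪[L] K | η.comp f ∈ S}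

/-- A subset `S ⊆ Emb(A,K)` is *scattered* if it is not somewhere unavoidable. -/
def EmbScattered {L : Language} {K : Type*} {A : Type*} [L.Structure K] [L.Structure A]
    (S : Set (A ↪[L] K)) : Prop :=
  ¬ EmbSomewhereUnavoidable S

/-- A coloring of `Emb(A,K)` is *unavoidable* if each of its fibers is empty or unavoidable. -/
def UnavoidableColoring {L : Language} {K : Type*} {A : Type*} [L.Structure K]
    [L.Structure A] {C : Type*} (γ : (A ↪[L] K) → C) : Prop :=
  ∀ c : C, γ ⁻¹' {c} = ∅ ∨ EmbUnavoidable (γ ⁻¹' {c})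

/-- `A` has big Ramsey degree `ℓ` (in `K`) if `ℓ` is least such that for every `r` and every
coloring `γ : Emb(A,K) → Fin r` there is a self-embedding `η` of `K` with
`|{γ(η∘f) : f ∈ Emb(A,K)}| ≤ ℓ`. -/
def HasBigRamseyDegree {L : Language} (A : Type*) [L.Structure A] (K : Type*)
    [L.Structure K] (ℓ : ℕ) : Prop :=
  IsLeast {l : ℕ | ∀ (r : ℕ) (γ : (A ↪[L] K) → Fin r),
    ∃ η : K ↪[L] K, (Set.range fun f : A ↪[L] K => γ (η.comp f)).ncard ≤ l} ℓ

/-- `D` is an ω-diagram (based on the `Fin (R n)`) compatible with the given systems of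
colorings `γ r ·` (one system for each `r`): (a) each `D m n (·,f)` is surjective; (b) the
cocycle condition holds; (c) for each `r`, `D` restricted below `r` is isomorphic to the
diagram of the colorings `γ r 0 ≪ ⋯ ≪ γ r (r-1)`. -/
def DiagramConds {L : Language} {K : Type*} [L.Structure K]
    (A : ℕ → L.Substructure K) (R : ℕ → ℕ) {C : ℕ → ℕ → Type*}
    (γ : ∀ r n, (↥(A n) ↪[L] K) → C r n)
    (D : ∀ m n : ℕ, Fin (R n) → (↥(A m) ↪[L] ↥(A n)) → Fin (R m)) : Prop :=
  (∀ m n, m ≤ n → ∀ f : ↥(A m) ↪[L] ↥(A n),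
    Function.Surjective fun j : Fin (R n) => D m n j f) ∧
  (∀ m n N, m ≤ n → n ≤ N →
    ∀ (f : ↥(A m) ↪[L] ↥(A n)) (s : ↥(A n) ↪[L] ↥(A N)) (j : Fin (R N)),
      D m N j (s.comp f) = D m n (D n N j s) f) ∧
  (∀ r : ℕ, ∃ σ : ∀ n, Fin (R n) → C r n,
      (∀ n, n < r → Function.Injective (σ n) ∧ Set.range (σ n) = Set.range (γ r n)) ∧
      (∀ m n, m ≤ n → n < r →
        ∀ (f : ↥(A m) ↪[L] ↥(A n)) (j : Fin (R n)) (s : ↥(A n) ↪[L] K),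
          γ r n s = σ n j → γ r m (s.comp f) = σ m (D m n j f)))

/-!
The diagram of a single system `γ^r` is read off directly: `D(m,n)(j,f)` is the colour of
`s ∘ f` for any `s` of colour `j`, which is well defined by strong refinement. Two systems of
the same length are isomorphic below their length: since `A_n` has big Ramsey degree `R_n`, the
product colouring `(γ_n, γ'_n)` takes only `R_n` values on some copy `η ∘ K`, and there it is the
graph of a bijection between the colours. Hence the diagrams of the systems `γ^r` agree below any
level up to relabelling, and a single diagram compatible with all of them exists by compactness
of the product of the finite sets of candidate diagrams (König's lemma). Uniqueness is
compactness once more, applied to the finite sets of isomorphisms below each level.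
-/

/-- König's lemma, in the form of compactness of a product of finite sets. -/
theorem exists_forall_of_dependsOn_finite {ι : Type*} {X : ι → Type*} [∀ i, Finite (X i)]
    {P : ℕ → (∀ i, X i) → Prop} {s : ℕ → Set ι} (hs : ∀ r, (s r).Finite)
    (hP : ∀ r, DependsOn (P r) (s r)) (hanti : ∀ r x, P (r + 1) x → P r x)
    (hne : ∀ r, ∃ x, P r x) : ∃ x, ∀ r, P r x := by
  let _ (i : ι) : TopologicalSpace (X i) := ⊥
  have _ (i : ι) : DiscreteTopology (X i) := ⟨rfl⟩
  have hclosed (r : ℕ) : IsClosed {x | P r x} := by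
    refine isOpen_compl_iff.1 (isOpen_iff_forall_mem_open.2 fun x hx => ?_)
    refine ⟨(s r).pi fun i => {x i}, fun y hy hPy => hx ?_,
      isOpen_set_pi (hs r) fun i _ => isOpen_discrete _, fun i _ => rfl⟩
    exact (hP r hy).mp hPy
  obtain ⟨x, hx⟩ := IsCompact.nonempty_iInter_of_sequence_nonempty_isCompact_isClosed
    (fun r => {x | P r x}) (fun r x => hanti r x) hne (hclosed 0).isCompact hclosed
  exact ⟨x, mem_iInter.1 hx⟩

theorem exists_equiv_comp_eq_of_eq_iff {α β β' : Type*} {c : α → β} {c' : α → β'}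
    (hc : Surjective c) (hc' : Surjective c') (h : ∀ a b, c a = c b ↔ c' a = c' b) :
    ∃ e : β ≃ β', ∀ a, c' a = e (c a) := by
  have hspec (a : α) : c' a = c' (surjInv hc (c a)) := (h _ _).1 (surjInv_eq hc _).symm
  refine ⟨Equiv.ofBijective (c' ∘ surjInv hc) ⟨fun x y hxy => ?_, fun y => ?_⟩, hspec⟩
  · rw [← surjInv_eq hc x, ← surjInv_eq hc y]
    exact (h _ _).2 hxy
  · obtain ⟨a, rfl⟩ := hc' y
    exact ⟨c a, (hspec a).symm⟩

theorem Set.injOn_of_image_eq_univ_of_ncard_le {α β : Type*} [Finite β] {s : Set α}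
    {p : α → β} (hs : s.Finite) (himage : p '' s = univ) (hcard : s.ncard ≤ Nat.card β) :
    InjOn p s :=
  injOn_of_ncard_image_eq
    (le_antisymm (ncard_image_le hs) (by rwa [himage, ncard_univ])) hs

theorem exists_eq_comp_fin_of_ncard_range_eq {α β : Type*} (c : α → β) {R : ℕ}
    (hc : (range c).ncard = R) (hR : 0 < R) :
    ∃ (Γ : α → Fin R) (σ : Fin R → β), Surjective Γ ∧ Injective σ ∧ c = σ ∘ Γ := by
  have : Finite (range c) := (finite_of_ncard_pos (hc ▸ hR)).to_subtype
  let e : range c ≃ Fin R := Finite.equivFinOfCardEq (by rw [Nat.card_coe_set_eq, hc])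
  refine ⟨e ∘ rangeFactorization c, Subtype.val ∘ e.symm,
    e.surjective.comp rangeFactorization_surjective,
    Subtype.val_injective.comp e.symm.injective, ?_⟩
  ext a
  simp [rangeFactorization]

section Coloring

variable {L : Language} {K : Type*} [L.Structure K] {A : Type*} [L.Structure A]

theorem UnavoidableColoring.comp_embedding {C : Type*} {γ : (A ↪[L] K) → C}
    (h : UnavoidableColoring γ) (η : K ↪[L] K) : UnavoidableColoring fun f => γ (η.comp f) := by
  intro c
  rcases h c with hc | hc
  · exact Or.inl (eq_empty_of_forall_notMem fun f hf =>
      (eq_empty_iff_forall_notMem.1 hc) (η.comp f) hf)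
  · refine Or.inr fun η' => ?_
    obtain ⟨f, hf⟩ := hc (η.comp η')
    exact ⟨f, by rwa [Embedding.comp_assoc] at hf⟩

theorem UnavoidableColoring.surjective_comp {C : Type*} {γ : (A ↪[L] K) → C}
    (h : UnavoidableColoring γ) (hs : Surjective γ) (η : K ↪[L] K) :
    Surjective fun f => γ (η.comp f) := by
  intro c
  rcases h c with hc | hc
  · obtain ⟨f, hf⟩ := hs c
    exact absurd (show f ∈ γ ⁻¹' {c} from hf) (hc ▸ notMem_empty f)
  · exact hc η

theorem UnavoidableColoring.of_comp {C D : Type*} {σ : D → C} {γ : (A ↪[L] K) → D}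
    (hσ : Injective σ) (h : UnavoidableColoring (σ ∘ γ)) : UnavoidableColoring γ := by
  intro d
  have hfiber : γ ⁻¹' {d} = (σ ∘ γ) ⁻¹' {σ d} := by ext; simp [hσ.eq_iff]
  rw [hfiber]
  exact h (σ d)

theorem HasBigRamseyDegree.pos [Nonempty (A ↪[L] K)] {ℓ : ℕ}
    (h : HasBigRamseyDegree (L := L) A K ℓ) : 0 < ℓ := by
  obtain ⟨η, hη⟩ := h.1 1 fun _ => 0
  have : 1 ≤ ℓ := by simpa [range_const] using hη
  omega

/-- On a copy `η ∘ K` where the pair colouring `(γ₁, γ₂)` takes at most `R` values, both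
projections are injective on those values, since each coordinate still takes all `R`. -/
theorem HasBigRamseyDegree.exists_comp_eq_iff {R : ℕ} (hR : HasBigRamseyDegree (L := L) A K R)
    {γ₁ γ₂ : (A ↪[L] K) → Fin R} (h₁ : UnavoidableColoring γ₁) (hs₁ : Surjective γ₁)
    (h₂ : UnavoidableColoring γ₂) (hs₂ : Surjective γ₂) :
    ∃ η : K ↪[L] K, ∀ f g,
      γ₁ (η.comp f) = γ₁ (η.comp g) ↔ γ₂ (η.comp f) = γ₂ (η.comp g) := by
  obtain ⟨η, hη⟩ := hR.1 (R * R) fun f => finProdFinEquiv (γ₁ f, γ₂ f)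
  set P := range fun f => (γ₁ (η.comp f), γ₂ (η.comp f))
  have hP : P.ncard ≤ Nat.card (Fin R) := by
    rw [Nat.card_fin, ← ncard_image_of_injective P finProdFinEquiv.injective, ← range_comp]
    exact hη
  have hfst : InjOn Prod.fst P := injOn_of_image_eq_univ_of_ncard_le (toFinite P)
    (by rw [← range_comp]; exact (h₁.surjective_comp hs₁ η).range_eq) hP
  have hsnd : InjOn Prod.snd P := injOn_of_image_eq_univ_of_ncard_le (toFinite P)
    (by rw [← range_comp]; exact (h₂.surjective_comp hs₂ η).range_eq) hP
  exact ⟨η, fun f g => ⟨fun h => congrArg Prod.snd (hfst ⟨f, rfl⟩ ⟨g, rfl⟩ h),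
    fun h => congrArg Prod.fst (hsnd ⟨f, rfl⟩ ⟨g, rfl⟩ h)⟩⟩

theorem HasBigRamseyDegree.exists_equiv_comp_eq {R : ℕ}
    (hR : HasBigRamseyDegree (L := L) A K R)
    {γ₁ γ₂ : (A ↪[L] K) → Fin R} (h₁ : UnavoidableColoring γ₁) (hs₁ : Surjective γ₁)
    (h₂ : UnavoidableColoring γ₂) (hs₂ : Surjective γ₂) :
    ∃ (η : K ↪[L] K) (e : Fin R ≃ Fin R), ∀ f, γ₂ (η.comp f) = e (γ₁ (η.comp f)) := by
  obtain ⟨η, hη⟩ := hR.exists_comp_eq_iff h₁ hs₁ h₂ hs₂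
  obtain ⟨e, he⟩ := exists_equiv_comp_eq_of_eq_iff (h₁.surjective_comp hs₁ η)
    (h₂.surjective_comp hs₂ η) hη
  exact ⟨η, e, he⟩

theorem exists_equiv_comp_eq_of_hasBigRamseyDegree {A : ℕ → Type*} [∀ n, L.Structure (A n)]
    {R : ℕ → ℕ} (hR : ∀ n, HasBigRamseyDegree (L := L) (A n) K (R n))
    {Γ Γ' : ∀ n, (A n ↪[L] K) → Fin (R n)} (r : ℕ)
    (hΓ : ∀ n, n < r → UnavoidableColoring (Γ n) ∧ Surjective (Γ n))
    (hΓ' : ∀ n, n < r → UnavoidableColoring (Γ' n) ∧ Surjective (Γ' n)) :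
    ∃ (η : K ↪[L] K) (e : ∀ n, Fin (R n) ≃ Fin (R n)),
      ∀ n, n < r → ∀ f, Γ' n (η.comp f) = e n (Γ n (η.comp f)) := by
  induction r with
  | zero => exact ⟨Embedding.refl L K, fun _ => Equiv.refl _, fun n hn => absurd hn n.not_lt_zero⟩
  | succ r ih =>
    obtain ⟨η, e, he⟩ := ih (fun n hn => hΓ n (Nat.lt_succ_of_lt hn))
      (fun n hn => hΓ' n (Nat.lt_succ_of_lt hn))
    obtain ⟨hu, hs⟩ := hΓ r r.lt_succ_self
    obtain ⟨hu', hs'⟩ := hΓ' r r.lt_succ_self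
    obtain ⟨η', b, hb⟩ := (hR r).exists_equiv_comp_eq (hu.comp_embedding η)
      (hu.surjective_comp hs η) (hu'.comp_embedding η) (hu'.surjective_comp hs' η)
    refine ⟨η.comp η', Function.update e r b, fun n hn f => ?_⟩
    rw [Embedding.comp_assoc]
    rcases Nat.lt_succ_iff_lt_or_eq.1 hn with hn | rfl
    · rw [Function.update_of_ne hn.ne]
      exact he n hn (η'.comp f)
    · rw [Function.update_self]
      exact hb f

end Coloring

section Diagram

variable {L : Language} {K : Type*} [L.Structure K]

instance (S : L.Substructure K) : Nonempty (S ↪[L] K) := ⟨S.subtype⟩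

variable (A : ℕ → L.Substructure K) (R : ℕ → ℕ)

abbrev Diagram : Type _ := ∀ m n : ℕ, Fin (R n) → (A m ↪[L] A n) → Fin (R m)

variable {A R}

def IsDiagramBelow (r : ℕ) (D : Diagram A R) : Prop :=
  (∀ m n, m ≤ n → n < r → ∀ f : A m ↪[L] A n, Surjective fun j => D m n j f) ∧
    ∀ m n N, m ≤ n → n ≤ N → N < r → ∀ (f : A m ↪[L] A n) (s : A n ↪[L] A N) (j : Fin (R N)),
      D m N j (s.comp f) = D m n (D n N j s) f

def IsIsoBelow (r : ℕ) (τ : ∀ n, Equiv.Perm (Fin (R n))) (D D' : Diagram A R) : Prop :=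
  ∀ m n, m ≤ n → n < r → ∀ j f, τ m (D m n j f) = D' m n (τ n j) f

/-- Condition (c) of `DiagramConds` at a single level `r`. -/
def IsColoringDiagramBelow (r : ℕ) {C : ℕ → Type*} (c : ∀ n, (A n ↪[L] K) → C n)
    (D : Diagram A R) : Prop :=
  ∃ σ : ∀ n, Fin (R n) → C n,
    (∀ n, n < r → Injective (σ n) ∧ range (σ n) = range (c n)) ∧
    ∀ m n, m ≤ n → n < r → ∀ (f : A m ↪[L] A n) (j : Fin (R n)) (s : A n ↪[L] K),
      c n s = σ n j → c m (s.comp f) = σ m (D m n j f)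

variable {r : ℕ} {τ τ' : ∀ n, Equiv.Perm (Fin (R n))} {D D' D'' : Diagram A R}

theorem IsIsoBelow.refl (r : ℕ) (D : Diagram A R) : IsIsoBelow r (fun _ => 1) D D :=
  fun _ _ _ _ _ _ => rfl

theorem IsIsoBelow.trans (h : IsIsoBelow r τ D D') (h' : IsIsoBelow r τ' D' D'') :
    IsIsoBelow r (fun n => (τ n).trans (τ' n)) D D'' := by
  intro m n hmn hnr j f
  simp only [Equiv.trans_apply, h m n hmn hnr, h' m n hmn hnr]

theorem IsIsoBelow.mono {r' : ℕ} (h : IsIsoBelow r' τ D D') (hr : r ≤ r') :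
    IsIsoBelow r τ D D' :=
  fun m n hmn hnr => h m n hmn (hnr.trans_le hr)

theorem IsIsoBelow.congr (h : IsIsoBelow r τ D D') (hτ : ∀ n, n < r → τ n = τ' n)
    (hD : ∀ m n, m ≤ n → n < r → D' m n = D'' m n) : IsIsoBelow r τ' D D'' := by
  intro m n hmn hnr j f
  rw [← hτ m (hmn.trans_lt hnr), ← hτ n hnr, ← hD m n hmn hnr, h m n hmn hnr]

theorem IsIsoBelow.isDiagramBelow (h : IsIsoBelow r τ D D') (hD : IsDiagramBelow r D) :
    IsDiagramBelow r D' := by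
  refine ⟨fun m n hmn hnr f i => ?_, fun m n N hmn hnN hNr f s j => ?_⟩
  · obtain ⟨j, hj⟩ : ∃ j, D m n j f = (τ m).symm i := hD.1 m n hmn hnr f _
    exact ⟨τ n j, show D' m n (τ n j) f = i by rw [← h m n hmn hnr, hj, Equiv.apply_symm_apply]⟩
  · obtain ⟨j, rfl⟩ := (τ N).surjective j
    have hnr := hnN.trans_lt hNr
    rw [← h m N (hmn.trans hnN) hNr, hD.2 m n N hmn hnN hNr, ← h n N hnN hNr,
      ← h m n hmn hnr]

theorem IsColoringDiagramBelow.of_isIsoBelow {C : ℕ → Type*} {c : ∀ n, (A n ↪[L] K) → C n}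
    (hD : IsColoringDiagramBelow r c D) (h : IsIsoBelow r τ D D') :
    IsColoringDiagramBelow r c D' := by
  obtain ⟨σ, hσ, hc⟩ := hD
  refine ⟨fun n => σ n ∘ (τ n).symm, fun n hn => ⟨(hσ n hn).1.comp (τ n).symm.injective, ?_⟩,
    fun m n hmn hnr f j s hs => ?_⟩
  · rw [(τ n).symm.surjective.range_comp, (hσ n hn).2]
  · obtain ⟨j, rfl⟩ := (τ n).surjective j
    simp only [comp_apply, Equiv.symm_apply_apply] at hs ⊢
    rw [hc m n hmn hnr f j s hs, ← h m n hmn hnr, Equiv.symm_apply_apply]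

theorem IsColoringDiagramBelow.exists_isIsoBelow {C : ℕ → Type*}
    {c : ∀ n, (A n ↪[L] K) → C n} (hD : IsColoringDiagramBelow r c D)
    (hD' : IsColoringDiagramBelow r c D') : ∃ τ, IsIsoBelow r τ D D' := by
  classical
  obtain ⟨σ, hσ, hc⟩ := hD
  obtain ⟨σ', hσ', hc'⟩ := hD'
  -- below `r`, `τ n` is `σ' n⁻¹ ∘ σ n`, through the common range of the two relabellings
  let τ : ∀ n, Equiv.Perm (Fin (R n)) := fun n =>
    if hn : n < r then
      (Equiv.ofInjective _ (hσ n hn).1).trans ((Equiv.setCongr ((hσ n hn).2.trans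
        (hσ' n hn).2.symm)).trans (Equiv.ofInjective _ (hσ' n hn).1).symm)
    else 1
  have hτ (n : ℕ) (hn : n < r) (j : Fin (R n)) : σ' n (τ n j) = σ n j := by
    simp only [τ, dif_pos hn, Equiv.trans_apply, Equiv.apply_ofInjective_symm,
      Equiv.setCongr_apply, Equiv.ofInjective_apply]
  refine ⟨τ, fun m n hmn hnr j f => (hσ' m (hmn.trans_lt hnr)).1 ?_⟩
  obtain ⟨s, hs⟩ : σ n j ∈ range (c n) := (hσ n hnr).2 ▸ mem_range_self j
  rw [hτ m (hmn.trans_lt hnr), ← hc m n hmn hnr f j s hs,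
    hc' m n hmn hnr f (τ n j) s (hs.trans (hτ n hnr j).symm)]

theorem exists_forall_isIsoBelow (h : ∀ r, ∃ τ, IsIsoBelow r τ D D') :
    ∃ τ, ∀ r, IsIsoBelow r τ D D' :=
  exists_forall_of_dependsOn_finite (s := Iio) (fun r => finite_Iio r)
    (fun _ _ _ hτ => propext ⟨fun h => h.congr hτ fun _ _ _ _ => rfl,
      fun h => h.congr (fun n hn => (hτ n hn).symm) fun _ _ _ _ => rfl⟩)
    (fun r _ h => h.mono r.le_succ) h

theorem diagramConds_of_forall {C : ℕ → ℕ → Type*} {γ : ∀ r n, (A n ↪[L] K) → C r n}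
    (h : ∀ r, IsDiagramBelow r D ∧ IsColoringDiagramBelow r (γ r) D) : DiagramConds A R γ D :=
  ⟨fun m n hmn => (h (n + 1)).1.1 m n hmn n.lt_succ_self,
    fun m n N hmn hnN => (h (N + 1)).1.2 m n N hmn hnN N.lt_succ_self, fun r => (h r).2⟩

end Diagram

section ColoringSystem

variable {L : Language} {K : Type*} [L.Structure K] {A : ℕ → L.Substructure K} {R : ℕ → ℕ}

structure IsColoringSystem (r : ℕ) (Γ : ∀ n, (A n ↪[L] K) → Fin (R n)) : Prop where
  unavoidable : ∀ n, n < r → UnavoidableColoring (Γ n)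
  surjective : ∀ n, n < r → Surjective (Γ n)
  refines : ∀ m n, m ≤ n → n < r → ∀ (f : A m ↪[L] A n) (s₀ s₁ : A n ↪[L] K),
    Γ n s₀ = Γ n s₁ → Γ m (s₀.comp f) = Γ m (s₁.comp f)

/-- By strong refinement, `invFun (Γ n) j` may be replaced by any embedding of colour `j`. -/
noncomputable def coloringDiagram (Γ : ∀ n, (A n ↪[L] K) → Fin (R n)) : Diagram A R :=
  fun m n j f => Γ m ((invFun (Γ n) j).comp f)

variable {r : ℕ} {Γ Γ' : ∀ n, (A n ↪[L] K) → Fin (R n)}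

theorem IsColoringSystem.mono {r' : ℕ} (hΓ : IsColoringSystem r' Γ) (hr : r ≤ r') :
    IsColoringSystem r Γ :=
  ⟨fun n hn => hΓ.unavoidable n (hn.trans_le hr), fun n hn => hΓ.surjective n (hn.trans_le hr),
    fun m n hmn hnr => hΓ.refines m n hmn (hnr.trans_le hr)⟩

theorem IsColoringSystem.coloringDiagram_eq (hΓ : IsColoringSystem r Γ) {m n : ℕ} (hmn : m ≤ n)
    (hnr : n < r) {j : Fin (R n)} {s : A n ↪[L] K} (hs : Γ n s = j) (f : A m ↪[L] A n) :
    coloringDiagram Γ m n j f = Γ m (s.comp f) :=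
  hΓ.refines m n hmn hnr f _ _ ((invFun_eq (hΓ.surjective n hnr j)).trans hs.symm)

theorem IsColoringSystem.isDiagramBelow (hK : L.IsUltrahomogeneous K)
    (hfin : ∀ n, (A n : Set K).Finite) (hΓ : IsColoringSystem r Γ) :
    IsDiagramBelow r (coloringDiagram Γ) := by
  refine ⟨fun m n hmn hnr f i => ?_, fun m n N hmn hnN hNr f s j => ?_⟩
  · obtain ⟨g, hg⟩ := hΓ.surjective m (hmn.trans_lt hnr) i
    have : Finite (A m) := (hfin m).to_subtype
    obtain ⟨s, rfl⟩ := hK.extend_embedding Structure.FG.of_finite g f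
    exact ⟨Γ n s, (hΓ.coloringDiagram_eq hmn hnr rfl f).trans hg⟩
  · obtain ⟨t, rfl⟩ := hΓ.surjective N hNr j
    rw [hΓ.coloringDiagram_eq (hmn.trans hnN) hNr rfl, hΓ.coloringDiagram_eq hnN hNr rfl,
      hΓ.coloringDiagram_eq hmn (hnN.trans_lt hNr) rfl, Embedding.comp_assoc]

theorem IsColoringSystem.isColoringDiagramBelow {C : ℕ → Type*} {c : ∀ n, (A n ↪[L] K) → C n}
    {σ : ∀ n, Fin (R n) → C n} (hΓ : IsColoringSystem r Γ)
    (hσ : ∀ n, n < r → Injective (σ n) ∧ c n = σ n ∘ Γ n) :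
    IsColoringDiagramBelow r c (coloringDiagram Γ) := by
  refine ⟨σ, fun n hn => ⟨(hσ n hn).1, ?_⟩, fun m n hmn hnr f j s hs => ?_⟩
  · rw [(hσ n hn).2, (hΓ.surjective n hn).range_comp]
  · have hs' : Γ n s = j := (hσ n hnr).1 (by rw [← hs, (hσ n hnr).2, comp_apply])
    rw [hΓ.coloringDiagram_eq hmn hnr hs' f, (hσ m (hmn.trans_lt hnr)).2, comp_apply]

theorem IsColoringSystem.exists_isIsoBelow
    (hR : ∀ n, HasBigRamseyDegree (L := L) (A n) K (R n)) (hΓ : IsColoringSystem r Γ)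
    (hΓ' : IsColoringSystem r Γ') :
    ∃ τ, IsIsoBelow r τ (coloringDiagram Γ) (coloringDiagram Γ') := by
  obtain ⟨η, τ, hτ⟩ := exists_equiv_comp_eq_of_hasBigRamseyDegree hR r
    (fun n hn => ⟨hΓ.unavoidable n hn, hΓ.surjective n hn⟩)
    (fun n hn => ⟨hΓ'.unavoidable n hn, hΓ'.surjective n hn⟩)
  refine ⟨τ, fun m n hmn hnr j f => ?_⟩
  obtain ⟨s, hs⟩ : ∃ s, Γ n (η.comp s) = j :=
    (hΓ.unavoidable n hnr).surjective_comp (hΓ.surjective n hnr) η j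
  rw [hΓ.coloringDiagram_eq hmn hnr hs,
    hΓ'.coloringDiagram_eq hmn hnr ((hτ n hnr s).trans (congrArg _ hs)),
    Embedding.comp_assoc, hτ m (hmn.trans_lt hnr) (s.comp f)]

theorem exists_isColoringSystem {C : ℕ → Type*} (c : ∀ n, (A n ↪[L] K) → C n)
    (hpos : ∀ n, 0 < R n)
    (hc : ∀ n, n < r → UnavoidableColoring (c n) ∧ (range (c n)).ncard = R n)
    (href : ∀ m n, m ≤ n → n < r → ∀ (f : A m ↪[L] A n) (s₀ s₁ : A n ↪[L] K),
      c n s₀ = c n s₁ → c m (s₀.comp f) = c m (s₁.comp f)) :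
    ∃ (Γ : ∀ n, (A n ↪[L] K) → Fin (R n)) (σ : ∀ n, Fin (R n) → C n),
      IsColoringSystem r Γ ∧ ∀ n, n < r → Injective (σ n) ∧ c n = σ n ∘ Γ n := by
  have hfactor (n : ℕ) : ∃ (Γn : (A n ↪[L] K) → Fin (R n)) (σn : Fin (R n) → C n),
      n < r → Surjective Γn ∧ Injective σn ∧ c n = σn ∘ Γn := by
    by_cases hn : n < r
    · obtain ⟨Γn, σn, h⟩ := exists_eq_comp_fin_of_ncard_range_eq (c n) (hc n hn).2 (hpos n)
      exact ⟨Γn, σn, fun _ => h⟩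
    · exact ⟨fun _ => ⟨0, hpos n⟩, fun _ => c n (A n).subtype, fun h => absurd h hn⟩
  choose Γ σ hΓσ using hfactor
  refine ⟨Γ, σ, ⟨fun n hn => ?_, fun n hn => (hΓσ n hn).1, fun m n hmn hnr f s₀ s₁ h => ?_⟩,
    fun n hn => (hΓσ n hn).2⟩
  · exact UnavoidableColoring.of_comp (hΓσ n hn).2.1 ((hΓσ n hn).2.2 ▸ (hc n hn).1)
  · obtain ⟨-, hσm, hcm⟩ := hΓσ m (hmn.trans_lt hnr)
    apply hσm
    rw [← comp_apply (f := σ m), ← comp_apply (f := σ m), ← hcm]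
    exact href m n hmn hnr f s₀ s₁ (by rw [(hΓσ n hnr).2.2, comp_apply, comp_apply, h])

theorem exists_forall_isIsoBelow_coloringDiagram (hfin : ∀ n, (A n : Set K).Finite)
    (hR : ∀ n, HasBigRamseyDegree (L := L) (A n) K (R n))
    {Γ : ℕ → ∀ n, (A n ↪[L] K) → Fin (R n)} (hΓ : ∀ r, IsColoringSystem r (Γ r)) :
    ∃ D : Diagram A R, ∀ r, ∃ τ, IsIsoBelow r τ (coloringDiagram (Γ r)) D := by
  have _ (m n : ℕ) : Finite (A m ↪[L] A n) := by
    have := (hfin m).to_subtype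
    have := (hfin n).to_subtype
    exact DFunLike.finite _
  -- diagrams are points of a product of finite sets indexed by the pairs `(m, n)`
  let P (r : ℕ) (x : ∀ i : ℕ × ℕ, Fin (R i.2) → (A i.1 ↪[L] A i.2) → Fin (R i.1)) : Prop :=
    ∃ τ, IsIsoBelow r τ (coloringDiagram (Γ r)) fun m n => x (m, n)
  have hdep (r : ℕ) : DependsOn (P r) (Iio r ×ˢ Iio r) := by
    intro x y hxy
    have hD (m n : ℕ) (hmn : m ≤ n) (hnr : n < r) : x (m, n) = y (m, n) :=
      hxy (m, n) ⟨hmn.trans_lt hnr, hnr⟩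
    exact propext (exists_congr fun τ => ⟨fun h => h.congr (fun _ _ => rfl) hD,
      fun h => h.congr (fun _ _ => rfl) fun m n hmn hnr => (hD m n hmn hnr).symm⟩)
  have hanti (r : ℕ) x (h : P (r + 1) x) : P r x := by
    obtain ⟨τ, hτ⟩ := h
    obtain ⟨ρ, hρ⟩ := (hΓ r).exists_isIsoBelow hR ((hΓ (r + 1)).mono r.le_succ)
    exact ⟨_, hρ.trans (hτ.mono r.le_succ)⟩
  obtain ⟨x, hx⟩ := exists_forall_of_dependsOn_finite
    (fun r => (finite_Iio r).prod (finite_Iio r)) hdep hanti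
    fun r => ⟨fun i => coloringDiagram (Γ r) i.1 i.2, fun _ => 1, IsIsoBelow.refl _ _⟩
  exact ⟨fun m n => x (m, n), hx⟩

end ColoringSystem

theorem exists_unique_bigRamsey_diagram_general {L : Language} {K : Type*} [L.Structure K]
    (hK : L.IsUltrahomogeneous K)
    (A : ℕ → L.Substructure K)
    (hfin : ∀ n, ((A n : Set K)).Finite)
    (R : ℕ → ℕ) (hR : ∀ n, HasBigRamseyDegree (L := L) ↥(A n) K (R n))
    {C : ℕ → ℕ → Type*} (γ : ∀ r n, (↥(A n) ↪[L] K) → C r n)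
    (hu : ∀ r n, n < r → UnavoidableColoring (γ r n) ∧ (Set.range (γ r n)).ncard = R n)
    (href : ∀ r m n, m ≤ n → n < r →
      ∀ (f : ↥(A m) ↪[L] ↥(A n)) (s₀ s₁ : ↥(A n) ↪[L] K),
        γ r n s₀ = γ r n s₁ → γ r m (s₀.comp f) = γ r m (s₁.comp f)) :
    ∃ D : ∀ m n : ℕ, Fin (R n) → (↥(A m) ↪[L] ↥(A n)) → Fin (R m),
      DiagramConds A R γ D ∧
      ∀ D' : ∀ m n : ℕ, Fin (R n) → (↥(A m) ↪[L] ↥(A n)) → Fin (R m),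
        DiagramConds A R γ D' →
        ∃ τ : ∀ n, Fin (R n) → Fin (R n),
          (∀ n, Function.Bijective (τ n)) ∧
          ∀ m n, m ≤ n → ∀ (j : Fin (R n)) (f : ↥(A m) ↪[L] ↥(A n)),
            τ m (D m n j f) = D' m n (τ n j) f := by
  choose Γ σ hΓ hσ using fun r =>
    exists_isColoringSystem (γ r) (fun n => (hR n).pos) (hu r) (href r)
  obtain ⟨D, hD⟩ := exists_forall_isIsoBelow_coloringDiagram hfin hR hΓ
  have hDconds : DiagramConds A R γ D := diagramConds_of_forall fun r => by
    obtain ⟨τ, hτ⟩ := hD r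
    exact ⟨hτ.isDiagramBelow ((hΓ r).isDiagramBelow hK hfin),
      ((hΓ r).isColoringDiagramBelow (hσ r)).of_isIsoBelow hτ⟩
  refine ⟨D, hDconds, fun D' hD' => ?_⟩
  obtain ⟨τ, hτ⟩ := exists_forall_isIsoBelow fun r =>
    IsColoringDiagramBelow.exists_isIsoBelow (c := γ r) (hDconds.2.2 r) (hD'.2.2 r)
  exact ⟨fun n => τ n, fun n => (τ n).bijective,
    fun m n hmn j f => hτ (n + 1) m n hmn n.lt_succ_self j f⟩

/-- Let `K = ⋃_n A_n` be a Fraïssé structure with an exhaustion by finite substructures, each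
`A_n` of finite big Ramsey degree `R_n`.  Suppose for every `r` there is a system
`γ^r_0 ≪ ⋯ ≪ γ^r_{r-1}` of unavoidable `R_n`-colorings of the `Emb(A_n,K)`.  Then there is an
ω-diagram `D` compatible with all these systems, and it is unique up to isomorphism of
diagrams. -/
theorem exists_unique_bigRamsey_diagram {L : Language} {K : Type*} [L.Structure K]
    [Countable K] [L.IsRelational] [Countable L.Symbols]
    (hK : L.IsUltrahomogeneous K)
    (A : ℕ → L.Substructure K) (hmono : Monotone A)
    (hfin : ∀ n, ((A n : Set K)).Finite) (hcover : ∀ x : K, ∃ n, x ∈ A n)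
    (R : ℕ → ℕ) (hR : ∀ n, HasBigRamseyDegree (L := L) ↥(A n) K (R n))
    {C : ℕ → ℕ → Type*} (γ : ∀ r n, (↥(A n) ↪[L] K) → C r n)
    (hu : ∀ r n, n < r → UnavoidableColoring (γ r n) ∧ (Set.range (γ r n)).ncard = R n)
    (href : ∀ r m n, m ≤ n → n < r →
      ∀ (f : ↥(A m) ↪[L] ↥(A n)) (s₀ s₁ : ↥(A n) ↪[L] K),
        γ r n s₀ = γ r n s₁ → γ r m (s₀.comp f) = γ r m (s₁.comp f)) :
    ∃ D : ∀ m n : ℕ, Fin (R n) → (↥(A m) ↪[L] ↥(A n)) → Fin (R m),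
      DiagramConds A R γ D ∧
      ∀ D' : ∀ m n : ℕ, Fin (R n) → (↥(A m) ↪[L] ↥(A n)) → Fin (R m),
        DiagramConds A R γ D' →
        ∃ τ : ∀ n, Fin (R n) → Fin (R n),
          (∀ n, Function.Bijective (τ n)) ∧
          ∀ m n, m ≤ n → ∀ (j : Fin (R n)) (f : ↥(A m) ↪[L] ↥(A n)),
            τ m (D m n j f) = D' m n (τ n j) f :=
  exists_unique_bigRamsey_diagram_general hK A hfin R hR γ hu href
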